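/- Let G be a compact Hausdorff topological group with identity e, and let a ∈ G with a ≠ e and a² = e. Let 0 < α₀ < 1 with α₀ ≠ 1/2, and set μ = α₀ δ_e + (1 − α₀) δ_a. Then μ has no generalized inverse in P(G): there is no ν ∈ P(G) with μ ∗ ν ∗ μ = μ. -/

import Mathlib

/-!
Write `x = ν {1}` and `y = ν {a}`. Since `a⁻¹ = a`, the masses of `μ ∗ ν ∗ μ` at `1` and at `a`
only involve `x` and `y`, and the equation `μ ∗ ν ∗ μ = μ` evaluated there is the corresponding
equation in the group algebra of `{1, a} ≅ ℤ/2`. Applying the two characters of `ℤ/2` gives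
`x + y = 1` and `(2α₀ - 1)² (x - y) = 2α₀ - 1`, so `|x - y| = 1 / |2α₀ - 1| > 1`, which is
impossible for `x, y ≥ 0`.
-/

open MeasureTheory
open scoped MeasureTheory ENNReal

namespace MeasureTheory.Measure

section Monoid

variable {M : Type*} [Monoid M] [MeasurableSpace M] [MeasurableSingletonClass M]

/- `MeasurableMul₂` can fail for the Borel σ-algebra of a group that is not second countable, so
convolution with a Dirac mass is computed through the following a.e. equalities. -/

lemma mul_ae_eq_dirac_prod (x : M) (ν : Measure M) [SFinite ν] :
    (fun p : M × M ↦ p.1 * p.2) =ᵐ[(dirac x).prod ν] fun p ↦ x * p.2 := by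
  rw [dirac_prod]
  have hfst : ∀ᵐ p ∂ν.map (Prod.mk x), p.1 = x :=
    (ae_map_iff measurable_prodMk_left.aemeasurable
      (measurable_fst (measurableSet_singleton x))).2 (Filter.Eventually.of_forall fun _ ↦ rfl)
  filter_upwards [hfst] with p hp
  rw [hp]

lemma mul_ae_eq_prod_dirac (μ : Measure M) [SFinite μ] (x : M) :
    (fun p : M × M ↦ p.1 * p.2) =ᵐ[μ.prod (dirac x)] fun p ↦ p.1 * x := by
  rw [prod_dirac]
  have hsnd : ∀ᵐ p ∂μ.map (·, x), p.2 = x :=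
    (ae_map_iff measurable_prodMk_right.aemeasurable
      (measurable_snd (measurableSet_singleton x))).2 (Filter.Eventually.of_forall fun _ ↦ rfl)
  filter_upwards [hsnd] with p hp
  rw [hp]

variable [MeasurableMul M]

lemma aemeasurable_mul_dirac_prod (x : M) (ν : Measure M) [SFinite ν] :
    AEMeasurable (fun p : M × M ↦ p.1 * p.2) ((dirac x).prod ν) :=
  ((measurable_const_mul x).comp measurable_snd).aemeasurable.congr
    (mul_ae_eq_dirac_prod x ν).symm

lemma aemeasurable_mul_prod_dirac (μ : Measure M) [SFinite μ] (x : M) :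
    AEMeasurable (fun p : M × M ↦ p.1 * p.2) (μ.prod (dirac x)) :=
  ((measurable_mul_const x).comp measurable_fst).aemeasurable.congr
    (mul_ae_eq_prod_dirac μ x).symm

lemma dirac_mconv' (x : M) (ν : Measure M) [SFinite ν] :
    dirac x ∗ₘ ν = ν.map (x * ·) := by
  rw [mconv, map_congr (mul_ae_eq_dirac_prod x ν), dirac_prod,
    map_map (by fun_prop) measurable_prodMk_left]
  rfl

lemma mconv_dirac' (μ : Measure M) [SFinite μ] (x : M) :
    μ ∗ₘ dirac x = μ.map (· * x) := by
  rw [mconv, map_congr (mul_ae_eq_prod_dirac μ x), prod_dirac,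
    map_map (by fun_prop) measurable_prodMk_right]
  rfl

lemma smul_dirac_add_smul_dirac_mconv (α β : ℝ≥0∞) (x y : M) (ν : Measure M) [SFinite ν] :
    (α • dirac x + β • dirac y) ∗ₘ ν = α • ν.map (x * ·) + β • ν.map (y * ·) := by
  rw [mconv, add_prod, prod_smul_left, prod_smul_left,
    AEMeasurable.map_add₀ ((aemeasurable_mul_dirac_prod x ν).smul_measure α)
      ((aemeasurable_mul_dirac_prod y ν).smul_measure β),
    Measure.map_smul, Measure.map_smul, ← mconv, ← mconv, dirac_mconv', dirac_mconv']

lemma mconv_smul_dirac_add_smul_dirac (μ : Measure M) [SFinite μ] (α β : ℝ≥0∞) (x y : M) :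
    μ ∗ₘ (α • dirac x + β • dirac y) = α • μ.map (· * x) + β • μ.map (· * y) := by
  rw [mconv, prod_add, prod_smul_right, prod_smul_right,
    AEMeasurable.map_add₀ ((aemeasurable_mul_prod_dirac μ x).smul_measure α)
      ((aemeasurable_mul_prod_dirac μ y).smul_measure β),
    Measure.map_smul, Measure.map_smul, ← mconv, ← mconv, mconv_dirac', mconv_dirac']

end Monoid

section Group

variable {G : Type*} [Group G] [MeasurableSpace G] [MeasurableMul G] [MeasurableSingletonClass G]

lemma smul_dirac_add_smul_dirac_mconv_mconv_apply_singleton (α β : ℝ≥0∞) (x y : G)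
    (ν : Measure G) [SFinite ν] (g : G) :
    (((α • dirac x + β • dirac y) ∗ₘ ν) ∗ₘ (α • dirac x + β • dirac y)) {g} =
      α * (α * ν {x⁻¹ * g * x⁻¹} + β * ν {y⁻¹ * g * x⁻¹}) +
        β * (α * ν {x⁻¹ * g * y⁻¹} + β * ν {y⁻¹ * g * y⁻¹}) := by
  simp only [mconv_smul_dirac_add_smul_dirac, smul_dirac_add_smul_dirac_mconv, add_apply,
    smul_apply, map_apply (measurable_mul_const _) (measurableSet_singleton _),
    map_apply (measurable_const_mul _) (measurableSet_singleton _),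
    Set.preimage_mul_left_singleton, Set.preimage_mul_right_singleton, smul_eq_mul, mul_assoc]

end Group

end MeasureTheory.Measure

lemma Real.eq_inv_two_of_two_point_equations {A X Y : ℝ} (hA₀ : 0 < A) (hA₁ : A < 1)
    (hX : 0 ≤ X) (hY : 0 ≤ Y)
    (h₁ : A * (A * X + (1 - A) * Y) + (1 - A) * (A * Y + (1 - A) * X) = A)
    (h₂ : A * (A * Y + (1 - A) * X) + (1 - A) * (A * X + (1 - A) * Y) = 1 - A) :
    A = 2⁻¹ := by
  have hsum : X + Y = 1 := by linear_combination h₁ + h₂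
  -- now `h₁` reads `(1 - A) (2A - 1) = -(2A - 1)² Y` and `h₂` reads `A (1 - 2A) = -(2A - 1)² X`
  by_contra hne
  rcases lt_or_gt_of_ne hne with hlt | hgt
  · nlinarith [mul_nonneg hX (sq_nonneg (2 * A - 1))]
  · nlinarith [mul_nonneg hY (sq_nonneg (2 * A - 1))]

lemma ENNReal.eq_inv_two_of_two_point_equations {α x y : ℝ≥0∞} (hα₀ : 0 < α) (hα₁ : α < 1)
    (hx : x ≠ ∞) (hy : y ≠ ∞)
    (h₁ : α * (α * x + (1 - α) * y) + (1 - α) * (α * y + (1 - α) * x) = α)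
    (h₂ : α * (α * y + (1 - α) * x) + (1 - α) * (α * x + (1 - α) * y) = 1 - α) :
    α = 2⁻¹ := by
  lift α to NNReal using hα₁.ne_top
  lift x to NNReal using hx
  lift y to NNReal using hy
  rw [← ENNReal.coe_inv_two]
  have hα₁' : α ≤ 1 := by exact_mod_cast hα₁.le
  norm_cast at *
  rw [← NNReal.coe_inj] at *
  push_cast [hα₁'] at *
  exact Real.eq_inv_two_of_two_point_equations hα₀ hα₁ x.2 y.2 h₁ h₂

theorem unbalanced_measure_no_generalized_inverse_general {G : Type*} [Group G] [TopologicalSpace G]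
    [IsTopologicalGroup G] [T2Space G] [MeasurableSpace G] [BorelSpace G]
    (a : G) (ha : a ≠ 1) (ha2 : a ^ 2 = 1)
    (α₀ : ℝ≥0∞) (h0 : 0 < α₀) (h1 : α₀ < 1) (hhalf : α₀ ≠ 2⁻¹)
    (μ : Measure G)
    (hμ : μ = α₀ • Measure.dirac (1 : G) + (1 - α₀) • Measure.dirac a) :
    ¬ ∃ ν : Measure G, IsProbabilityMeasure ν ∧ ν.Regular ∧ (μ ∗ₘ ν) ∗ₘ μ = μ := by
  rintro ⟨ν, hν, -, hgen⟩
  subst hμ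
  have ha_mul : a * a = 1 := by rwa [← sq]
  have ha_inv : a⁻¹ = a := inv_eq_of_mul_eq_one_right ha_mul
  refine hhalf (ENNReal.eq_inv_two_of_two_point_equations h0 h1 (measure_ne_top ν {1})
    (measure_ne_top ν {a}) ?_ ?_)
  · simpa [Measure.smul_dirac_add_smul_dirac_mconv_mconv_apply_singleton, ha_inv, ha_mul, ha]
      using congrArg (· {1}) hgen
  · simpa [Measure.smul_dirac_add_smul_dirac_mconv_mconv_apply_singleton, ha_inv, ha_mul, ha.symm]
      using congrArg (· {a}) hgen

/-- Let `a ≠ e` with `a² = e` in a compact Hausdorff topological group `G`, and let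
`0 < α₀ < 1`, `α₀ ≠ 1/2`. Then `μ = α₀ δ_e + (1 - α₀) δ_a` has no generalized inverse
in `P(G)`. -/
theorem unbalanced_measure_no_generalized_inverse {G : Type*} [Group G] [TopologicalSpace G]
    [IsTopologicalGroup G] [CompactSpace G] [T2Space G] [MeasurableSpace G] [BorelSpace G]
    (a : G) (ha : a ≠ 1) (ha2 : a ^ 2 = 1)
    (α₀ : ℝ≥0∞) (h0 : 0 < α₀) (h1 : α₀ < 1) (hhalf : α₀ ≠ 2⁻¹)
    (μ : Measure G)
    (hμ : μ = α₀ • Measure.dirac (1 : G) + (1 - α₀) • Measure.dirac a) :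
    ¬ ∃ ν : Measure G, IsProbabilityMeasure ν ∧ ν.Regular ∧ (μ ∗ₘ ν) ∗ₘ μ = μ :=
  unbalanced_measure_no_generalized_inverse_general a ha ha2 α₀ h0 h1 hhalf μ hμ
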